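/- Let ≿₁ and ≿₂ be two IB preferences on 𝓕 with utility indices u₁, u₂ and maximal families 𝒫₁*, 𝒬₁* and 𝒫₂*, 𝒬₂*. Then the following are equivalent: (i) ≿₁ is more ambiguity averse than ≿₂ (i.e., for all f ∈ 𝓕 and x ∈ X, x ≿₂ f implies x ≿₁ f); (ii) u₁ and u₂ are positive affine transformations of each other and, after normalizing so that u₁ = u₂, 𝒫₁* ⊆ 𝒫₂*; (iii) u₁ and u₂ are positive affine transformations of each other and, after normalizing so that u₁ = u₂, 𝒬₁* ⊇ 𝒬₂*. -/

import Mathlib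

/-!
Comparing constant acts, (i) says that `u₂ y ≤ u₂ x` implies `u₁ y ≤ u₁ x` on `X`. Mixing
along `X` shows that any three points of the curve `x ↦ (u₁ x, u₂ x)` are collinear, so `u₂` is a
positive affine function of `u₁`. Once the utilities agree, (i) is the statement
`u₁ (x₁ f) ≤ u₁ (x₂ f)` for every act `f`, and `𝒫*`, `𝒬*` are defined by one-sided bounds
against `u₁ (x_f)`; this gives both inclusions.

Conversely, a set of a representing family of `≿₁` attaining the maxmin value of `f` lies in
`𝒫₁* ⊆ 𝒫₂*`, which bounds `u₁ (x₁ f)` by `u₁ (x₂ f)`. For `𝒬`, the set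
`{q ∈ Δ | ∫ u₁ f dq ≤ u₁ (x₂ f)}` lies in `𝒬₂*`: for each act `g`, take the prior minimising
`∫ u f` in the set that attains the maxmin value of `g` for `≿₂`. It is weak*-compact because `Δ`
is a closed subset of `[0, 1]^(Set S)` in the product topology, which is finer than the weak*
topology. Hence it lies in `𝒬₁*`, which again gives `u₁ (x₁ f) ≤ u₁ (x₂ f)`.
-/

open scoped Pointwise
open MeasureTheory

namespace Paper

variable {S V : Type*}

/-- An algebra of subsets of `S` (the events `Σ`). -/
structure IsSetAlg (𝓐 : Set (Set S)) : Prop where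
  empty_mem : ∅ ∈ 𝓐
  compl_mem : ∀ A ∈ 𝓐, Aᶜ ∈ 𝓐
  union_mem : ∀ A ∈ 𝓐, ∀ B ∈ 𝓐, A ∪ B ∈ 𝓐

/-- `B₀(Σ)`: real-valued `Σ`-measurable simple functions. -/
def IsSimpleFn (𝓐 : Set (Set S)) (φ : S → ℝ) : Prop :=
  (Set.range φ).Finite ∧ ∀ t : ℝ, φ ⁻¹' {t} ∈ 𝓐

open Classical in
/-- The integral of a simple function with respect to a finitely additive set function. -/
noncomputable def fint (p : Set S → ℝ) (φ : S → ℝ) : ℝ :=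
  if h : (Set.range φ).Finite then ∑ t ∈ h.toFinset, t * p (φ ⁻¹' {t}) else 0

/-- `Δ`: the finitely additive probabilities on `Σ` (canonically extended by `0` off `Σ`). -/
def Δset (𝓐 : Set (Set S)) : Set (Set S → ℝ) :=
  {p | p Set.univ = 1 ∧ (∀ A ∈ 𝓐, 0 ≤ p A) ∧
    (∀ A ∈ 𝓐, ∀ B ∈ 𝓐, Disjoint A B → p (A ∪ B) = p A + p B) ∧
    ∀ A : Set S, A ∉ 𝓐 → p A = 0}

/-- The weak* topology `σ(Δ, B₀(Σ))`, i.e. the topology induced by the evaluation maps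
`p ↦ ∫ φ dp`, `φ ∈ B₀(Σ)`. -/
noncomputable def weakStar (𝓐 : Set (Set S)) : TopologicalSpace (Set S → ℝ) :=
  TopologicalSpace.induced
    (fun p => fun φ : {φ : S → ℝ // IsSimpleFn 𝓐 φ} => fint p φ.1)
    Pi.topologicalSpace

/-- `𝒞`: the weak*-lower semicontinuous convex functions `c : Δ → (-∞, ∞]`. -/
def Cscr (𝓐 : Set (Set S)) : Set ((Set S → ℝ) → EReal) :=
  {c | (∀ p ∈ Δset 𝓐, ⊥ < c p) ∧
    (@LowerSemicontinuousOn (Set S → ℝ) EReal (weakStar 𝓐) _ c (Δset 𝓐)) ∧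
    ∀ p ∈ Δset 𝓐, ∀ q ∈ Δset 𝓐, ∀ a b : ℝ, 0 ≤ a → 0 ≤ b → a + b = 1 →
      c (a • p + b • q) ≤ (a : EReal) * c p + (b : EReal) * c q}

/-- A subset `C ⊆ 𝒞` is grounded if `sup_{c ∈ C} min_{p ∈ Δ} c p = 0`. -/
def Grounded (𝓐 : Set (Set S)) (C : Set ((Set S → ℝ) → EReal)) : Prop :=
  (⨆ c ∈ C, ⨅ p ∈ Δset 𝓐, c p) = 0

/-- `min_{p ∈ Δ} (∫ φ dp + c p)`. -/
noncomputable def minVal (𝓐 : Set (Set S)) (c : (Set S → ℝ) → EReal) (φ : S → ℝ) : EReal :=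
  ⨅ p ∈ Δset 𝓐, ((fint p φ : EReal) + c p)

/-- `max_{q ∈ Δ} (∫ φ dq - b q)`. -/
noncomputable def maxVal (𝓐 : Set (Set S)) (b : (Set S → ℝ) → EReal) (φ : S → ℝ) : EReal :=
  ⨆ q ∈ Δset 𝓐, ((fint q φ : EReal) - b q)

/-- `max_{c ∈ C} min_{p ∈ Δ} (∫ φ dp + c p)`. -/
noncomputable def maxminVal (𝓐 : Set (Set S)) (C : Set ((Set S → ℝ) → EReal))
    (φ : S → ℝ) : EReal :=
  ⨆ c ∈ C, minVal 𝓐 c φ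

/-- `min_{b ∈ B} max_{q ∈ Δ} (∫ φ dq - b q)`. -/
noncomputable def minmaxVal (𝓐 : Set (Set S)) (B : Set ((Set S → ℝ) → EReal))
    (φ : S → ℝ) : EReal :=
  ⨅ b ∈ B, maxVal 𝓐 b φ

/-- `min_{p ∈ P} ∫ φ dp`. -/
noncomputable def minPVal (P : Set (Set S → ℝ)) (φ : S → ℝ) : EReal :=
  ⨅ p ∈ P, (fint p φ : EReal)

/-- `max_{q ∈ Q} ∫ φ dq`. -/
noncomputable def maxQVal (Q : Set (Set S → ℝ)) (φ : S → ℝ) : EReal :=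
  ⨆ q ∈ Q, (fint q φ : EReal)

/-- `max_{P ∈ Pfam} min_{p ∈ P} ∫ φ dp`. -/
noncomputable def maxminPVal (Pfam : Set (Set (Set S → ℝ))) (φ : S → ℝ) : EReal :=
  ⨆ P ∈ Pfam, minPVal P φ

/-- `min_{Q ∈ Qfam} max_{q ∈ Q} ∫ φ dq`. -/
noncomputable def minmaxQVal (Qfam : Set (Set (Set S → ℝ))) (φ : S → ℝ) : EReal :=
  ⨅ Q ∈ Qfam, maxQVal Q φ

open Classical in
/-- The convex-analytic indicator `δ_P` of a set `P`. -/
noncomputable def ind (P : Set (Set S → ℝ)) : (Set S → ℝ) → EReal :=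
  fun p => if p ∈ P then (0 : EReal) else ⊤

variable [AddCommGroup V] [Module ℝ V]

/-- `𝓕`: the simple acts, i.e. `Σ`-measurable maps `f : S → X` with finitely many values. -/
def Acts (𝓐 : Set (Set S)) (X : Set V) : Set (S → V) :=
  {f | (∀ s, f s ∈ X) ∧ (Set.range f).Finite ∧ ∀ v : V, f ⁻¹' {v} ∈ 𝓐}

/-- The constant act with value `x`. -/
def constAct (x : V) : S → V := fun _ : S => x

/-- The mixture `α f + (1 - α) g` of two acts, defined statewise. -/
def mix (α : ℝ) (f g : S → V) : S → V := fun s => α • f s + (1 - α) • g s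

/-- The statewise utility `u ∘ f` of an act. -/
def uAct (u : V → ℝ) (f : S → V) : S → ℝ := fun s => u (f s)

/-- `u : X → ℝ` is nonconstant and affine on `X`. -/
def IsNonconstAffine (X : Set V) (u : V → ℝ) : Prop :=
  (∀ x ∈ X, ∀ y ∈ X, ∀ t ∈ Set.Icc (0 : ℝ) 1,
      u (t • x + (1 - t) • y) = t * u x + (1 - t) * u y) ∧
  ∃ x ∈ X, ∃ y ∈ X, u x ≠ u y

/-- A niveloidal preference: Axioms A1 (weak order), A2 (monotonicity), A3 (Archimedean)
and A4 (weak C-independence). -/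
structure NiveloidalPref (𝓐 : Set (Set S)) (X : Set V)
    (R : (S → V) → (S → V) → Prop) : Prop where
  nontrivial : ∃ f ∈ Acts 𝓐 X, ∃ g ∈ Acts 𝓐 X, R f g ∧ ¬ R g f
  complete : ∀ f ∈ Acts 𝓐 X, ∀ g ∈ Acts 𝓐 X, R f g ∨ R g f
  transitive : ∀ f ∈ Acts 𝓐 X, ∀ g ∈ Acts 𝓐 X, ∀ h ∈ Acts 𝓐 X, R f g → R g h → R f h
  monotone : ∀ f ∈ Acts 𝓐 X, ∀ g ∈ Acts 𝓐 X,
    (∀ s : S, R (constAct (f s)) (constAct (g s))) → R f g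
  archimedean : ∀ f ∈ Acts 𝓐 X, ∀ g ∈ Acts 𝓐 X, ∀ h ∈ Acts 𝓐 X,
    (R f g ∧ ¬ R g f) → (R g h ∧ ¬ R h g) →
    ∃ α ∈ Set.Ioo (0 : ℝ) 1, ∃ β ∈ Set.Ioo (0 : ℝ) 1,
      (R (mix α f h) g ∧ ¬ R g (mix α f h)) ∧
      (R g (mix β f h) ∧ ¬ R (mix β f h) g)
  weakCIndep : ∀ f ∈ Acts 𝓐 X, ∀ g ∈ Acts 𝓐 X, ∀ x ∈ X, ∀ y ∈ X,
    ∀ α ∈ Set.Ioo (0 : ℝ) 1,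
    R (mix α f (constAct x)) (mix α g (constAct x)) →
    R (mix α f (constAct y)) (mix α g (constAct y))

/-- An invariant biseparable preference: Axioms A1 (weak order), A2 (monotonicity),
A3 (Archimedean) and A7 (C-independence). -/
structure IBPref (𝓐 : Set (Set S)) (X : Set V)
    (R : (S → V) → (S → V) → Prop) : Prop where
  nontrivial : ∃ f ∈ Acts 𝓐 X, ∃ g ∈ Acts 𝓐 X, R f g ∧ ¬ R g f
  complete : ∀ f ∈ Acts 𝓐 X, ∀ g ∈ Acts 𝓐 X, R f g ∨ R g f
  transitive : ∀ f ∈ Acts 𝓐 X, ∀ g ∈ Acts 𝓐 X, ∀ h ∈ Acts 𝓐 X, R f g → R g h → R f h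
  monotone : ∀ f ∈ Acts 𝓐 X, ∀ g ∈ Acts 𝓐 X,
    (∀ s : S, R (constAct (f s)) (constAct (g s))) → R f g
  archimedean : ∀ f ∈ Acts 𝓐 X, ∀ g ∈ Acts 𝓐 X, ∀ h ∈ Acts 𝓐 X,
    (R f g ∧ ¬ R g f) → (R g h ∧ ¬ R h g) →
    ∃ α ∈ Set.Ioo (0 : ℝ) 1, ∃ β ∈ Set.Ioo (0 : ℝ) 1,
      (R (mix α f h) g ∧ ¬ R g (mix α f h)) ∧
      (R g (mix β f h) ∧ ¬ R (mix β f h) g)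
  cIndep : ∀ f ∈ Acts 𝓐 X, ∀ g ∈ Acts 𝓐 X, ∀ x ∈ X, ∀ α ∈ Set.Ioo (0 : ℝ) 1,
    (R f g ↔ R (mix α f (constAct x)) (mix α g (constAct x)))

/-- Axiom A5 (uncertainty aversion). -/
def UncertaintyAverse (𝓐 : Set (Set S)) (X : Set V)
    (R : (S → V) → (S → V) → Prop) : Prop :=
  ∀ f ∈ Acts 𝓐 X, ∀ g ∈ Acts 𝓐 X, ∀ α ∈ Set.Ioo (0 : ℝ) 1,
    R f g → R g f → R (mix α f g) f

/-- `xf` assigns to every act a certainty equivalent. -/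
def IsCE (𝓐 : Set (Set S)) (X : Set V) (R : (S → V) → (S → V) → Prop)
    (xf : (S → V) → V) : Prop :=
  ∀ f ∈ Acts 𝓐 X, xf f ∈ X ∧ R f (constAct (xf f)) ∧ R (constAct (xf f)) f

/-- `C*`: the maximal candidate set of penalty functions. -/
def CstarOf (𝓐 : Set (Set S)) (X : Set V) (u : V → ℝ) (xf : (S → V) → V) :
    Set ((Set S → ℝ) → EReal) :=
  {c | c ∈ Cscr 𝓐 ∧ ∀ f ∈ Acts 𝓐 X, minVal 𝓐 c (uAct u f) ≤ (u (xf f) : EReal)}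

/-- `B*`: the maximal candidate set of reward functions. -/
def BstarOf (𝓐 : Set (Set S)) (X : Set V) (u : V → ℝ) (xf : (S → V) → V) :
    Set ((Set S → ℝ) → EReal) :=
  {b | b ∈ Cscr 𝓐 ∧ ∀ f ∈ Acts 𝓐 X, (u (xf f) : EReal) ≤ maxVal 𝓐 b (uAct u f)}

/-- `Pfam*`: the maximal family of prior sets (maxmin form). -/
def PstarOf (𝓐 : Set (Set S)) (X : Set V) (u : V → ℝ) (xf : (S → V) → V) :
    Set (Set (Set S → ℝ)) :=
  {P | P ⊆ Δset 𝓐 ∧ P.Nonempty ∧ Convex ℝ P ∧ (@IsCompact _ (weakStar 𝓐) P) ∧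
    ∀ f ∈ Acts 𝓐 X, minPVal P (uAct u f) ≤ (u (xf f) : EReal)}

/-- `Qfam*`: the maximal family of prior sets (minmax form). -/
def QstarOf (𝓐 : Set (Set S)) (X : Set V) (u : V → ℝ) (xf : (S → V) → V) :
    Set (Set (Set S → ℝ)) :=
  {Q | Q ⊆ Δset 𝓐 ∧ Q.Nonempty ∧ Convex ℝ Q ∧ (@IsCompact _ (weakStar 𝓐) Q) ∧
    ∀ f ∈ Acts 𝓐 X, (u (xf f) : EReal) ≤ maxQVal Q (uAct u f)}

/-- `C` yields the maxmin representation of `R` with utility `u`. -/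
def MaxminRep (𝓐 : Set (Set S)) (X : Set V) (R : (S → V) → (S → V) → Prop)
    (u : V → ℝ) (C : Set ((Set S → ℝ) → EReal)) : Prop :=
  ∀ f ∈ Acts 𝓐 X, ∀ g ∈ Acts 𝓐 X,
    (R f g ↔ maxminVal 𝓐 C (uAct u g) ≤ maxminVal 𝓐 C (uAct u f))

/-- All indicated maxima over `C` and minima over `Δ` are attained. -/
def MaxminAttained (𝓐 : Set (Set S)) (X : Set V) (u : V → ℝ)
    (C : Set ((Set S → ℝ) → EReal)) : Prop :=
  ∀ f ∈ Acts 𝓐 X,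
    (∀ c ∈ C, ∃ p ∈ Δset 𝓐,
      minVal 𝓐 c (uAct u f) = (fint p (uAct u f) : EReal) + c p) ∧
    ∃ c ∈ C, maxminVal 𝓐 C (uAct u f) = minVal 𝓐 c (uAct u f)

/-- `B` yields the minmax representation of `R` with utility `u`. -/
def MinmaxRep (𝓐 : Set (Set S)) (X : Set V) (R : (S → V) → (S → V) → Prop)
    (u : V → ℝ) (B : Set ((Set S → ℝ) → EReal)) : Prop :=
  ∀ f ∈ Acts 𝓐 X, ∀ g ∈ Acts 𝓐 X,
    (R f g ↔ minmaxVal 𝓐 B (uAct u g) ≤ minmaxVal 𝓐 B (uAct u f))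

/-- All indicated minima over `B` and maxima over `Δ` are attained. -/
def MinmaxAttained (𝓐 : Set (Set S)) (X : Set V) (u : V → ℝ)
    (B : Set ((Set S → ℝ) → EReal)) : Prop :=
  ∀ f ∈ Acts 𝓐 X,
    (∀ b ∈ B, ∃ q ∈ Δset 𝓐,
      maxVal 𝓐 b (uAct u f) = (fint q (uAct u f) : EReal) - b q) ∧
    ∃ b ∈ B, minmaxVal 𝓐 B (uAct u f) = maxVal 𝓐 b (uAct u f)

/-- A family of nonempty, convex, weak*-compact subsets of `Δ`. -/
def IsPriorFamily (𝓐 : Set (Set S)) (Pfam : Set (Set (Set S → ℝ))) : Prop :=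
  Pfam.Nonempty ∧ ∀ P ∈ Pfam,
    P ⊆ Δset 𝓐 ∧ P.Nonempty ∧ Convex ℝ P ∧ (@IsCompact _ (weakStar 𝓐) P)

/-- `Pfam` yields the maxmin representation of `R` with utility `u`. -/
def PRep (𝓐 : Set (Set S)) (X : Set V) (R : (S → V) → (S → V) → Prop)
    (u : V → ℝ) (Pfam : Set (Set (Set S → ℝ))) : Prop :=
  ∀ f ∈ Acts 𝓐 X, ∀ g ∈ Acts 𝓐 X,
    (R f g ↔ maxminPVal Pfam (uAct u g) ≤ maxminPVal Pfam (uAct u f))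

/-- All indicated maxima over `Pfam` and minima over `P` are attained. -/
def PAttained (𝓐 : Set (Set S)) (X : Set V) (u : V → ℝ)
    (Pfam : Set (Set (Set S → ℝ))) : Prop :=
  ∀ f ∈ Acts 𝓐 X,
    (∀ P ∈ Pfam, ∃ p ∈ P, minPVal P (uAct u f) = (fint p (uAct u f) : EReal)) ∧
    ∃ P ∈ Pfam, maxminPVal Pfam (uAct u f) = minPVal P (uAct u f)

/-- `Qfam` yields the minmax representation of `R` with utility `u`. -/
def QRep (𝓐 : Set (Set S)) (X : Set V) (R : (S → V) → (S → V) → Prop)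
    (u : V → ℝ) (Qfam : Set (Set (Set S → ℝ))) : Prop :=
  ∀ f ∈ Acts 𝓐 X, ∀ g ∈ Acts 𝓐 X,
    (R f g ↔ minmaxQVal Qfam (uAct u g) ≤ minmaxQVal Qfam (uAct u f))

/-- All indicated minima over `Qfam` and maxima over `Q` are attained. -/
def QAttained (𝓐 : Set (Set S)) (X : Set V) (u : V → ℝ)
    (Qfam : Set (Set (Set S → ℝ))) : Prop :=
  ∀ f ∈ Acts 𝓐 X,
    (∀ Q ∈ Qfam, ∃ q ∈ Q, maxQVal Q (uAct u f) = (fint q (uAct u f) : EReal)) ∧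
    ∃ Q ∈ Qfam, minmaxQVal Qfam (uAct u f) = maxQVal Q (uAct u f)

/-- `c₁ ≈_u c₂`: `c₁` and `c₂` induce the same variational functional on `B₀(Σ, u(X))`. -/
def ApproxEq (𝓐 : Set (Set S)) (X : Set V) (u : V → ℝ)
    (c₁ c₂ : (Set S → ℝ) → EReal) : Prop :=
  ∀ φ : S → ℝ, IsSimpleFn 𝓐 φ → (∀ s, φ s ∈ u '' X) →
    minVal 𝓐 c₁ φ = minVal 𝓐 c₂ φ

/-- `R₁` is more ambiguity averse than `R₂`. -/
def MoreAmbiguityAverse (𝓐 : Set (Set S)) (X : Set V)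
    (R₁ R₂ : (S → V) → (S → V) → Prop) : Prop :=
  ∀ f ∈ Acts 𝓐 X, ∀ x ∈ X, R₂ (constAct x) f → R₁ (constAct x) f

/-- `u₁` and `u₂` are positive affine transformations of each other on `X`. -/
def CardEquiv (X : Set V) (u₁ u₂ : V → ℝ) : Prop :=
  ∃ a b : ℝ, 0 < a ∧ ∀ x ∈ X, u₂ x = a * u₁ x + b

/-- A capacity on `(S, Σ)`. -/
def IsCapacity (𝓐 : Set (Set S)) (π : Set S → ℝ) : Prop :=
  π ∅ = 0 ∧ π Set.univ = 1 ∧ ∀ A ∈ 𝓐, ∀ B ∈ 𝓐, A ⊆ B → π A ≤ π B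

/-- The Choquet integral of a (simple) function against a capacity. -/
noncomputable def choquet (π : Set S → ℝ) (φ : S → ℝ) : ℝ :=
  (∫ t in Set.Ioi (0 : ℝ), π {s | t ≤ φ s}) +
    ∫ t in Set.Iio (0 : ℝ), (π {s | t ≤ φ s} - 1)

lemma IsSetAlg.univ_mem {𝓐 : Set (Set S)} (hA : IsSetAlg 𝓐) : Set.univ ∈ 𝓐 := by
  simpa using hA.compl_mem ∅ hA.empty_mem

lemma IsSetAlg.biUnion_mem {𝓐 : Set (Set S)} (hA : IsSetAlg 𝓐) {ι : Type*} (T : Finset ι)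
    {A : ι → Set S} (h : ∀ i ∈ T, A i ∈ 𝓐) : (⋃ i ∈ T, A i) ∈ 𝓐 := by
  classical
  induction T using Finset.induction_on with
  | empty => simpa using hA.empty_mem
  | insert a T _ ih =>
    rw [Finset.set_biUnion_insert]
    exact hA.union_mem _ (h a (Finset.mem_insert_self a T)) _
      (ih fun i hi => h i (Finset.mem_insert_of_mem hi))

section Integral

variable {𝓐 : Set (Set S)} {p q : Set S → ℝ} {φ : S → ℝ}

lemma fint_eq_sum (h : (Set.range φ).Finite) :
    fint p φ = ∑ t ∈ h.toFinset, t * p (φ ⁻¹' {t}) :=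
  dif_pos h

lemma fint_const [Nonempty S] (hq : q Set.univ = 1) (c : ℝ) : fint q (fun _ : S => c) = c := by
  have hfin : (Set.range fun _ : S => c).Finite := by simp
  simp [fint_eq_sum hfin, hq]

lemma fint_smul_add (hφ : (Set.range φ).Finite) (a b : ℝ) :
    fint (a • p + b • q) φ = a * fint p φ + b * fint q φ := by
  simp only [fint_eq_sum hφ, Finset.mul_sum, ← Finset.sum_add_distrib, Pi.add_apply,
    Pi.smul_apply, smul_eq_mul]
  exact Finset.sum_congr rfl fun t _ => by ring

lemma continuous_fint (φ : S → ℝ) : Continuous fun p : Set S → ℝ => fint p φ := by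
  by_cases h : (Set.range φ).Finite
  · simp_rw [fint_eq_sum h]
    exact continuous_finsetSum _ fun t _ => continuous_const.mul (continuous_apply _)
  · simp only [fint, dif_neg h]
    exact continuous_const

lemma convex_setOf_fint_le (hφ : (Set.range φ).Finite) (c : ℝ) :
    Convex ℝ {q : Set S → ℝ | fint q φ ≤ c} := by
  intro p hp q hq a b ha hb hab
  simp only [Set.mem_ofPred_eq, fint_smul_add hφ] at hp hq ⊢
  calc a * fint p φ + b * fint q φ ≤ a * c + b * c := by gcongr
    _ = c := by rw [← add_mul, hab, one_mul]

lemma apply_empty_of_mem_Δset (hA : IsSetAlg 𝓐) (hq : q ∈ Δset 𝓐) : q ∅ = 0 := by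
  simpa using hq.2.2.1 ∅ hA.empty_mem ∅ hA.empty_mem (by simp)

lemma apply_mem_Icc_of_mem_Δset (hA : IsSetAlg 𝓐) (hq : q ∈ Δset 𝓐) (A : Set S) :
    q A ∈ Set.Icc 0 1 := by
  by_cases hmem : A ∈ 𝓐
  · have hadd := hq.2.2.1 A hmem Aᶜ (hA.compl_mem A hmem) disjoint_compl_right
    rw [Set.union_compl_self, hq.1] at hadd
    exact ⟨hq.2.1 A hmem, by linarith [hq.2.1 Aᶜ (hA.compl_mem A hmem)]⟩
  · simp [hq.2.2.2 A hmem]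

lemma sum_fibres_of_mem_Δset (hA : IsSetAlg 𝓐) (hq : q ∈ Δset 𝓐) (hφ : IsSimpleFn 𝓐 φ) :
    ∑ t ∈ hφ.1.toFinset, q (φ ⁻¹' {t}) = 1 := by
  classical
  have hadd : ∀ T : Finset ℝ, q (⋃ t ∈ T, φ ⁻¹' {t}) = ∑ t ∈ T, q (φ ⁻¹' {t}) := by
    intro T
    induction T using Finset.induction_on with
    | empty => simpa using apply_empty_of_mem_Δset hA hq
    | insert a T ha ih =>
      rw [Finset.set_biUnion_insert, Finset.sum_insert ha, ← ih]
      refine hq.2.2.1 _ (hφ.2 a) _ (hA.biUnion_mem T fun t _ => hφ.2 t) ?_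
      exact Set.disjoint_iUnion₂_right.2 fun t ht =>
        (Set.disjoint_singleton.2 (ne_of_mem_of_not_mem ht ha).symm).preimage φ
  have hcover : (⋃ t ∈ hφ.1.toFinset, φ ⁻¹' {t}) = Set.univ := by
    ext s
    simp
  rw [← hadd, hcover, hq.1]

lemma fint_affine_comp (hA : IsSetAlg 𝓐) (hq : q ∈ Δset 𝓐) (hφ : IsSimpleFn 𝓐 φ) {a b : ℝ}
    (ha : a ≠ 0) : fint q (fun s => a * φ s + b) = a * fint q φ + b := by
  classical
  set g : ℝ → ℝ := fun t => a * t + b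
  have hg : Function.Injective g := fun t t' h => mul_left_cancel₀ ha (by simpa [g] using h)
  have hrange : (Set.range fun s => a * φ s + b) = g '' Set.range φ := Set.range_comp g φ
  have hfin : (Set.range fun s => a * φ s + b).Finite := hrange ▸ hφ.1.image g
  have hfinset : hfin.toFinset = hφ.1.toFinset.image g := by
    ext; simp only [Set.Finite.mem_toFinset, hrange, Finset.mem_image, Set.mem_image]
  have hfibre : ∀ t, (fun s => a * φ s + b) ⁻¹' {g t} = φ ⁻¹' {t} := fun t => by
    ext s; simp only [Set.mem_preimage, Set.mem_singleton_iff]; exact hg.eq_iff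
  rw [fint_eq_sum hfin, fint_eq_sum hφ.1, hfinset, Finset.sum_image hg.injOn]
  simp only [hfibre, g, add_mul, Finset.sum_add_distrib, mul_assoc, ← Finset.mul_sum,
    sum_fibres_of_mem_Δset hA hq hφ, mul_one]

end Integral

section PriorSets

variable {𝓐 : Set (Set S)}

lemma convex_Δset : Convex ℝ (Δset 𝓐) := by
  intro p hp q hq a b ha hb hab
  refine ⟨?_, fun A hA => ?_, fun A hA B hB hAB => ?_, fun A hA => ?_⟩ <;>
    simp only [Pi.add_apply, Pi.smul_apply, smul_eq_mul]
  · rw [hp.1, hq.1, mul_one, mul_one, hab]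
  · exact add_nonneg (mul_nonneg ha (hp.2.1 A hA)) (mul_nonneg hb (hq.2.1 A hA))
  · rw [hp.2.2.1 A hA B hB hAB, hq.2.2.1 A hA B hB hAB]; ring
  · rw [hp.2.2.2 A hA, hq.2.2.2 A hA, mul_zero, mul_zero, add_zero]

lemma isClosed_Δset : IsClosed (Δset 𝓐) := by
  simp only [Δset, Set.ofPred_and, Set.ofPred_forall]
  refine (isClosed_eq (by fun_prop) (by fun_prop)).inter
    ((isClosed_biInter fun A _ => isClosed_le (by fun_prop) (by fun_prop)).inter
      ((isClosed_biInter fun A _ => isClosed_biInter fun B _ => isClosed_iInter fun _ =>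
        isClosed_eq (by fun_prop) (by fun_prop)).inter
      (isClosed_iInter fun A => isClosed_iInter fun _ => isClosed_eq (by fun_prop) (by fun_prop))))

lemma isCompact_Δset (hA : IsSetAlg 𝓐) : IsCompact (Δset 𝓐) :=
  (isCompact_univ_pi fun _ => isCompact_Icc).of_isClosed_subset isClosed_Δset
    fun _ hq A _ => apply_mem_Icc_of_mem_Δset hA hq A

lemma continuous_id_weakStar :
    @Continuous (Set S → ℝ) (Set S → ℝ) Pi.topologicalSpace (weakStar 𝓐) id :=
  continuous_induced_rng.2 (continuous_pi fun φ => continuous_fint φ.1)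

lemma isCompact_weakStar_of_isCompact {K : Set (Set S → ℝ)} (hK : IsCompact K) :
    @IsCompact _ (weakStar 𝓐) K := by
  have h := @IsCompact.image _ _ _ (weakStar 𝓐) _ _ hK continuous_id_weakStar
  rwa [Set.image_id] at h

end PriorSets

section Acts

variable {W : Type*} {𝓐 : Set (Set S)} {X : Set W}

lemma constAct_mem_Acts (hA : IsSetAlg 𝓐) {x : W} (hx : x ∈ X) :
    (constAct x : S → W) ∈ Acts 𝓐 X := by
  refine ⟨fun _ => hx, (Set.finite_singleton x).subset (Set.range_const_subset), fun v => ?_⟩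
  by_cases h : x = v
  · simpa [constAct, h, Set.preimage] using hA.univ_mem
  · simpa [constAct, h, Set.preimage] using hA.empty_mem

lemma isSimpleFn_uAct (hA : IsSetAlg 𝓐) {f : S → W} (hf : f ∈ Acts 𝓐 X) (u : W → ℝ) :
    IsSimpleFn 𝓐 (uAct u f) := by
  classical
  obtain ⟨-, hfin, hpre⟩ := hf
  refine ⟨Set.range_comp u f ▸ hfin.image u, fun t => ?_⟩
  have hfibre : uAct u f ⁻¹' {t} = ⋃ v ∈ hfin.toFinset.filter (u · = t), f ⁻¹' {v} := by
    ext s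
    simp [uAct]
  rw [hfibre]
  exact hA.biUnion_mem _ fun v _ => hpre v

lemma fint_uAct_eq_of_affine (hA : IsSetAlg 𝓐) {q : Set S → ℝ} (hq : q ∈ Δset 𝓐)
    {f : S → W} (hf : f ∈ Acts 𝓐 X) {u₁ u₂ : W → ℝ} {a b : ℝ} (ha : a ≠ 0)
    (hab : ∀ x ∈ X, u₂ x = a * u₁ x + b) :
    fint q (uAct u₂ f) = a * fint q (uAct u₁ f) + b := by
  have h : uAct u₂ f = fun s => a * uAct u₁ f s + b := funext fun s => hab _ (hf.1 s)
  rw [h, fint_affine_comp hA hq (isSimpleFn_uAct hA hf u₁) ha]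

end Acts

section Representation

variable {W : Type*} {𝓐 : Set (Set S)} {X : Set W} {R : (S → W) → (S → W) → Prop}
  {u : W → ℝ} {xf : (S → W) → W} {Pfam : Set (Set (Set S → ℝ))}

lemma maxminPVal_const [Nonempty S] (hfam : IsPriorFamily 𝓐 Pfam) (c : ℝ) :
    maxminPVal Pfam (fun _ : S => c) = c := by
  have hmin : ∀ P ∈ Pfam, minPVal P (fun _ : S => c) = c := fun P hP => by
    obtain ⟨hPΔ, hPne, -⟩ := hfam.2 P hP
    rw [minPVal, ← biInf_const hPne (a := (c : EReal))]
    exact biInf_congr fun p hp => by rw [fint_const (hPΔ hp).1]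
  rw [maxminPVal, biSup_congr hmin, biSup_const hfam.1]

lemma PRep.maxminPVal_eq [Nonempty S] (hrep : PRep 𝓐 X R u Pfam) (hA : IsSetAlg 𝓐)
    (hfam : IsPriorFamily 𝓐 Pfam) (hxf : IsCE 𝓐 X R xf) {f : S → W} (hf : f ∈ Acts 𝓐 X) :
    maxminPVal Pfam (uAct u f) = u (xf f) := by
  obtain ⟨hxfX, hfx, hxf⟩ := hxf f hf
  have hx := constAct_mem_Acts hA hxfX
  have hconst : maxminPVal Pfam (uAct u (constAct (xf f))) = u (xf f) :=
    maxminPVal_const hfam (u (xf f))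
  have hle := (hrep _ hx f hf).1 hxf
  have hge := (hrep f hf _ hx).1 hfx
  rw [hconst] at hle hge
  exact le_antisymm hle hge

lemma PRep.exists_fint_le_and_le_fint [Nonempty S] (hrep : PRep 𝓐 X R u Pfam)
    (hA : IsSetAlg 𝓐) (hfam : IsPriorFamily 𝓐 Pfam) (hatt : PAttained 𝓐 X u Pfam)
    (hxf : IsCE 𝓐 X R xf) {f g : S → W} (hf : f ∈ Acts 𝓐 X) (hg : g ∈ Acts 𝓐 X) :
    ∃ q ∈ Δset 𝓐, fint q (uAct u f) ≤ u (xf f) ∧ u (xf g) ≤ fint q (uAct u g) := by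
  obtain ⟨P, hP, hPg⟩ := (hatt g hg).2
  obtain ⟨q, hq, hqf⟩ := (hatt f hf).1 P hP
  refine ⟨q, (hfam.2 P hP).1 hq, ?_, ?_⟩
  · have h : (fint q (uAct u f) : EReal) ≤ u (xf f) := by
      rw [← hqf, ← hrep.maxminPVal_eq hA hfam hxf hf]
      exact le_iSup₂ (f := fun P _ => minPVal P (uAct u f)) P hP
    exact_mod_cast h
  · have h : (u (xf g) : EReal) ≤ fint q (uAct u g) := by
      rw [← hrep.maxminPVal_eq hA hfam hxf hg, hPg]
      exact iInf₂_le q hq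
    exact_mod_cast h

lemma inter_setOf_fint_le_mem_QstarOf (hA : IsSetAlg 𝓐) {φ : S → ℝ} (hφ : IsSimpleFn 𝓐 φ)
    {c : ℝ} (hne : (Acts 𝓐 X).Nonempty)
    (hwit : ∀ g ∈ Acts 𝓐 X, ∃ q ∈ Δset 𝓐, fint q φ ≤ c ∧ u (xf g) ≤ fint q (uAct u g)) :
    Δset 𝓐 ∩ {q | fint q φ ≤ c} ∈ QstarOf 𝓐 X u xf := by
  obtain ⟨f, hf⟩ := hne
  obtain ⟨q₀, hq₀, hq₀φ, -⟩ := hwit f hf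
  refine ⟨Set.inter_subset_left, ⟨q₀, hq₀, hq₀φ⟩, convex_Δset.inter (convex_setOf_fint_le hφ.1 c),
    isCompact_weakStar_of_isCompact
      ((isCompact_Δset hA).inter_right (isClosed_le (continuous_fint φ) continuous_const)),
    fun g hg => ?_⟩
  obtain ⟨q, hq, hqφ, hqg⟩ := hwit g hg
  exact (EReal.coe_le_coe_iff.2 hqg).trans
    (le_iSup₂ (f := fun q _ => (fint q (uAct u g) : EReal)) q ⟨hq, hqφ⟩)

end Representation

section Utility

variable {X : Set V} {u₁ u₂ : V → ℝ}

lemma mul_eq_of_between (hXc : Convex ℝ X) (hu₁ : IsNonconstAffine X u₁)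
    (hu₂ : IsNonconstAffine X u₂) (hlevel : ∀ x ∈ X, ∀ y ∈ X, u₂ x = u₂ y → u₁ x = u₁ y)
    {z v w : V} (hz : z ∈ X) (hv : v ∈ X) (hw : w ∈ X)
    (hzv : u₂ z ≤ u₂ v) (hvw : u₂ v ≤ u₂ w) (hzw : u₂ z < u₂ w) :
    (u₂ w - u₂ z) * u₁ v = (u₂ v - u₂ z) * u₁ w + (u₂ w - u₂ v) * u₁ z := by
  have hd : 0 < u₂ w - u₂ z := sub_pos.2 hzw
  set t := (u₂ v - u₂ z) / (u₂ w - u₂ z) with ht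
  have ht0 : 0 ≤ t := div_nonneg (sub_nonneg.2 hzv) hd.le
  have ht1 : t ≤ 1 := (div_le_one hd).2 (by linarith)
  have hmem : t • w + (1 - t) • z ∈ X := hXc hw hz ht0 (by linarith) (by ring)
  have hmix₂ : u₂ (t • w + (1 - t) • z) = u₂ v := by
    rw [hu₂.1 w hw z hz t ⟨ht0, ht1⟩, ht]
    field_simp
    ring
  have hmix₁ := hlevel _ hmem v hv hmix₂
  rw [hu₁.1 w hw z hz t ⟨ht0, ht1⟩, ht] at hmix₁
  field_simp at hmix₁
  linear_combination -hmix₁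

lemma cardEquiv_of_le_imp_le (hXc : Convex ℝ X) (hu₁ : IsNonconstAffine X u₁)
    (hu₂ : IsNonconstAffine X u₂) (hmono : ∀ x ∈ X, ∀ y ∈ X, u₂ y ≤ u₂ x → u₁ y ≤ u₁ x) :
    CardEquiv X u₁ u₂ := by
  have hlevel : ∀ x ∈ X, ∀ y ∈ X, u₂ x = u₂ y → u₁ x = u₁ y := fun x hx y hy h =>
    le_antisymm (hmono y hy x hx h.le) (hmono x hx y hy h.ge)
  obtain ⟨x₀, hx₀, y₀, hy₀, hlt⟩ : ∃ x₀ ∈ X, ∃ y₀ ∈ X, u₂ y₀ < u₂ x₀ := by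
    obtain ⟨x, hx, y, hy, hne⟩ := hu₂.2
    rcases hne.lt_or_gt with h | h
    exacts [⟨y, hy, x, hx, h⟩, ⟨x, hx, y, hy, h⟩]
  have hcollinear : ∀ z ∈ X,
      (u₂ x₀ - u₂ y₀) * (u₁ z - u₁ y₀) = (u₁ x₀ - u₁ y₀) * (u₂ z - u₂ y₀) := by
    intro z hz
    rcases lt_or_ge (u₂ z) (u₂ y₀) with h | h
    · linear_combination
        -mul_eq_of_between hXc hu₁ hu₂ hlevel hz hy₀ hx₀ h.le hlt.le (h.trans hlt)
    rcases le_or_gt (u₂ z) (u₂ x₀) with h' | h'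
    · linear_combination mul_eq_of_between hXc hu₁ hu₂ hlevel hy₀ hz hx₀ h h' hlt
    · linear_combination
        -mul_eq_of_between hXc hu₁ hu₂ hlevel hy₀ hx₀ hz hlt.le h'.le (hlt.trans h')
  have hpos : 0 < u₁ x₀ - u₁ y₀ := by
    refine lt_of_le_of_ne (sub_nonneg.2 (hmono x₀ hx₀ y₀ hy₀ hlt.le)) fun h => ?_
    obtain ⟨x, hx, y, hy, hne⟩ := hu₁.2
    have hx' := hcollinear x hx
    have hy' := hcollinear y hy
    have hd : u₂ x₀ - u₂ y₀ ≠ 0 := (sub_pos.2 hlt).ne'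
    rw [← h, zero_mul] at hx' hy'
    exact hne (by linarith [(mul_eq_zero.1 hx').resolve_left hd,
      (mul_eq_zero.1 hy').resolve_left hd])
  refine ⟨(u₂ x₀ - u₂ y₀) / (u₁ x₀ - u₁ y₀),
    u₂ y₀ - (u₂ x₀ - u₂ y₀) / (u₁ x₀ - u₁ y₀) * u₁ y₀, div_pos (sub_pos.2 hlt) hpos,
    fun z hz => ?_⟩
  field_simp
  linear_combination -hcollinear z hz

end Utility

section Comparison

variable {𝓐 : Set (Set S)} {X : Set V} {R₁ R₂ : (S → V) → (S → V) → Prop}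
  {u₁ u₂ : V → ℝ} {xf₁ xf₂ : (S → V) → V}

lemma MoreAmbiguityAverse.cardEquiv (h : MoreAmbiguityAverse 𝓐 X R₁ R₂) (hA : IsSetAlg 𝓐)
    (hXc : Convex ℝ X) (hu₁ : IsNonconstAffine X u₁) (hu₂ : IsNonconstAffine X u₂)
    (hconst₁ : ∀ x ∈ X, ∀ y ∈ X, (R₁ (constAct x) (constAct y) ↔ u₁ y ≤ u₁ x))
    (hconst₂ : ∀ x ∈ X, ∀ y ∈ X, (R₂ (constAct x) (constAct y) ↔ u₂ y ≤ u₂ x)) :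
    CardEquiv X u₁ u₂ :=
  cardEquiv_of_le_imp_le hXc hu₁ hu₂ fun x hx y hy hle =>
    (hconst₁ x hx y hy).1 (h _ (constAct_mem_Acts hA hy) x hx ((hconst₂ x hx y hy).2 hle))

lemma MoreAmbiguityAverse.ce_le (h : MoreAmbiguityAverse 𝓐 X R₁ R₂) (hA : IsSetAlg 𝓐)
    (h₁ : IBPref 𝓐 X R₁)
    (hconst₁ : ∀ x ∈ X, ∀ y ∈ X, (R₁ (constAct x) (constAct y) ↔ u₁ y ≤ u₁ x))
    (hxf₁ : IsCE 𝓐 X R₁ xf₁) (hxf₂ : IsCE 𝓐 X R₂ xf₂) {f : S → V} (hf : f ∈ Acts 𝓐 X) :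
    u₁ (xf₁ f) ≤ u₁ (xf₂ f) := by
  obtain ⟨hx₁, hfx₁, -⟩ := hxf₁ f hf
  obtain ⟨hx₂, -, hx₂f⟩ := hxf₂ f hf
  exact (hconst₁ _ hx₂ _ hx₁).1 (h₁.transitive _ (constAct_mem_Acts hA hx₂) f hf _
    (constAct_mem_Acts hA hx₁) (h f hf _ hx₂ hx₂f) hfx₁)

lemma moreAmbiguityAverse_of_ce_le (hA : IsSetAlg 𝓐) (h₁ : IBPref 𝓐 X R₁)
    (h₂ : IBPref 𝓐 X R₂)
    (hconst₁ : ∀ x ∈ X, ∀ y ∈ X, (R₁ (constAct x) (constAct y) ↔ u₁ y ≤ u₁ x))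
    (hconst₂ : ∀ x ∈ X, ∀ y ∈ X, (R₂ (constAct x) (constAct y) ↔ u₂ y ≤ u₂ x))
    (hxf₁ : IsCE 𝓐 X R₁ xf₁) (hxf₂ : IsCE 𝓐 X R₂ xf₂) (hcard : CardEquiv X u₁ u₂)
    (hce : ∀ f ∈ Acts 𝓐 X, u₁ (xf₁ f) ≤ u₁ (xf₂ f)) :
    MoreAmbiguityAverse 𝓐 X R₁ R₂ := by
  intro f hf x hx hxf
  obtain ⟨a, b, ha, hab⟩ := hcard
  obtain ⟨hx₁, -, hx₁f⟩ := hxf₁ f hf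
  obtain ⟨hx₂, hfx₂, -⟩ := hxf₂ f hf
  have hu₂ : u₂ (xf₂ f) ≤ u₂ x := (hconst₂ x hx _ hx₂).1
    (h₂.transitive _ (constAct_mem_Acts hA hx) f hf _ (constAct_mem_Acts hA hx₂) hxf hfx₂)
  rw [hab x hx, hab _ hx₂] at hu₂
  have hu₁ : u₁ (xf₁ f) ≤ u₁ x :=
    (hce f hf).trans (le_of_mul_le_mul_left (by linarith) ha)
  exact h₁.transitive _ (constAct_mem_Acts hA hx) _ (constAct_mem_Acts hA hx₁) f hf
    ((hconst₁ x hx _ hx₁).2 hu₁) hx₁f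

lemma moreAmbiguityAverse_iff_cardEquiv_and_ce_le (hA : IsSetAlg 𝓐) (hXc : Convex ℝ X)
    (h₁ : IBPref 𝓐 X R₁) (h₂ : IBPref 𝓐 X R₂)
    (hu₁ : IsNonconstAffine X u₁) (hu₂ : IsNonconstAffine X u₂)
    (hconst₁ : ∀ x ∈ X, ∀ y ∈ X, (R₁ (constAct x) (constAct y) ↔ u₁ y ≤ u₁ x))
    (hconst₂ : ∀ x ∈ X, ∀ y ∈ X, (R₂ (constAct x) (constAct y) ↔ u₂ y ≤ u₂ x))
    (hxf₁ : IsCE 𝓐 X R₁ xf₁) (hxf₂ : IsCE 𝓐 X R₂ xf₂) :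
    MoreAmbiguityAverse 𝓐 X R₁ R₂ ↔
      CardEquiv X u₁ u₂ ∧ ∀ f ∈ Acts 𝓐 X, u₁ (xf₁ f) ≤ u₁ (xf₂ f) :=
  ⟨fun h => ⟨h.cardEquiv hA hXc hu₁ hu₂ hconst₁ hconst₂,
      fun _ hf => h.ce_le hA h₁ hconst₁ hxf₁ hxf₂ hf⟩,
    fun ⟨hcard, hce⟩ =>
      moreAmbiguityAverse_of_ce_le hA h₁ h₂ hconst₁ hconst₂ hxf₁ hxf₂ hcard hce⟩

end Comparison

section PriorFamilies

variable {W : Type*} {𝓐 : Set (Set S)} {X : Set W} {u : W → ℝ} {xf xf' : (S → W) → W}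

lemma PstarOf_subset_PstarOf (h : ∀ f ∈ Acts 𝓐 X, u (xf f) ≤ u (xf' f)) :
    PstarOf 𝓐 X u xf ⊆ PstarOf 𝓐 X u xf' :=
  fun _ ⟨hPΔ, hPne, hPcv, hPcp, hPval⟩ =>
    ⟨hPΔ, hPne, hPcv, hPcp, fun f hf => (hPval f hf).trans (EReal.coe_le_coe_iff.2 (h f hf))⟩

lemma QstarOf_subset_QstarOf (h : ∀ f ∈ Acts 𝓐 X, u (xf f) ≤ u (xf' f)) :
    QstarOf 𝓐 X u xf' ⊆ QstarOf 𝓐 X u xf :=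
  fun _ ⟨hQΔ, hQne, hQcv, hQcp, hQval⟩ =>
    ⟨hQΔ, hQne, hQcv, hQcp, fun f hf => (EReal.coe_le_coe_iff.2 (h f hf)).trans (hQval f hf)⟩

lemma ce_le_of_PstarOf_subset [Nonempty S] {R : (S → W) → (S → W) → Prop}
    {Pfam : Set (Set (Set S → ℝ))} (hA : IsSetAlg 𝓐) (hfam : IsPriorFamily 𝓐 Pfam)
    (hatt : PAttained 𝓐 X u Pfam) (hrep : PRep 𝓐 X R u Pfam) (hxf : IsCE 𝓐 X R xf)
    (hsub : PstarOf 𝓐 X u xf ⊆ PstarOf 𝓐 X u xf') {f : S → W} (hf : f ∈ Acts 𝓐 X) :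
    u (xf f) ≤ u (xf' f) := by
  have hPfam : Pfam ⊆ PstarOf 𝓐 X u xf := fun P hP =>
    ⟨(hfam.2 P hP).1, (hfam.2 P hP).2.1, (hfam.2 P hP).2.2.1, (hfam.2 P hP).2.2.2,
      fun g hg => hrep.maxminPVal_eq hA hfam hxf hg ▸
        le_iSup₂ (f := fun P _ => minPVal P (uAct u g)) P hP⟩
  obtain ⟨P, hP, hPf⟩ := (hatt f hf).2
  have h : (u (xf f) : EReal) ≤ u (xf' f) := by
    rw [← hrep.maxminPVal_eq hA hfam hxf hf, hPf]
    exact (hsub (hPfam hP)).2.2.2.2 f hf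
  exact_mod_cast h

lemma ce_le_of_QstarOf_subset [Nonempty S] {R₂ : (S → W) → (S → W) → Prop}
    {u₁ u₂ : W → ℝ} {xf₁ xf₂ : (S → W) → W} {Pfam₂ : Set (Set (Set S → ℝ))}
    (hA : IsSetAlg 𝓐) (hfam₂ : IsPriorFamily 𝓐 Pfam₂)
    (hatt₂ : PAttained 𝓐 X u₂ Pfam₂) (hrep₂ : PRep 𝓐 X R₂ u₂ Pfam₂) (hxf₂ : IsCE 𝓐 X R₂ xf₂)
    (hcard : CardEquiv X u₁ u₂) (hsub : QstarOf 𝓐 X u₁ xf₂ ⊆ QstarOf 𝓐 X u₁ xf₁)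
    {f : S → W} (hf : f ∈ Acts 𝓐 X) : u₁ (xf₁ f) ≤ u₁ (xf₂ f) := by
  obtain ⟨a, b, ha, hab⟩ := hcard
  have hwit : ∀ g ∈ Acts 𝓐 X, ∃ q ∈ Δset 𝓐,
      fint q (uAct u₁ f) ≤ u₁ (xf₂ f) ∧ u₁ (xf₂ g) ≤ fint q (uAct u₁ g) := by
    intro g hg
    obtain ⟨q, hq, hqf, hqg⟩ := hrep₂.exists_fint_le_and_le_fint hA hfam₂ hatt₂ hxf₂ hf hg
    rw [fint_uAct_eq_of_affine hA hq hf ha.ne' hab, hab _ (hxf₂ f hf).1] at hqf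
    rw [fint_uAct_eq_of_affine hA hq hg ha.ne' hab, hab _ (hxf₂ g hg).1] at hqg
    exact ⟨q, hq, le_of_mul_le_mul_left (by linarith) ha, le_of_mul_le_mul_left (by linarith) ha⟩
  have hQ := hsub (inter_setOf_fint_le_mem_QstarOf hA (isSimpleFn_uAct hA hf u₁) ⟨f, hf⟩ hwit)
  have h : (u₁ (xf₁ f) : EReal) ≤ u₁ (xf₂ f) :=
    (hQ.2.2.2.2 f hf).trans (iSup₂_le fun q hq => EReal.coe_le_coe_iff.2 hq.2)
  exact_mod_cast h

end PriorFamilies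

theorem stmt18_general {S V : Type*} [Nonempty S] [AddCommGroup V] [Module ℝ V]
    (𝓐 : Set (Set S)) (hA : IsSetAlg 𝓐)
    (X : Set V) (hXc : Convex ℝ X)
    (R₁ R₂ : (S → V) → (S → V) → Prop)
    (h₁ : IBPref 𝓐 X R₁) (h₂ : IBPref 𝓐 X R₂)
    (u₁ u₂ : V → ℝ) (hu₁ : IsNonconstAffine X u₁) (hu₂ : IsNonconstAffine X u₂)
    (hrep₁ : ∃ Pfam : Set (Set (Set S → ℝ)), IsPriorFamily 𝓐 Pfam ∧
      PAttained 𝓐 X u₁ Pfam ∧ PRep 𝓐 X R₁ u₁ Pfam)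
    (hrep₂ : ∃ Pfam : Set (Set (Set S → ℝ)), IsPriorFamily 𝓐 Pfam ∧
      PAttained 𝓐 X u₂ Pfam ∧ PRep 𝓐 X R₂ u₂ Pfam)
    (hconst₁ : ∀ x ∈ X, ∀ y ∈ X, (R₁ (constAct x) (constAct y) ↔ u₁ y ≤ u₁ x))
    (hconst₂ : ∀ x ∈ X, ∀ y ∈ X, (R₂ (constAct x) (constAct y) ↔ u₂ y ≤ u₂ x))
    (xf₁ xf₂ : (S → V) → V) (hxf₁ : IsCE 𝓐 X R₁ xf₁) (hxf₂ : IsCE 𝓐 X R₂ xf₂) :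
    (MoreAmbiguityAverse 𝓐 X R₁ R₂ ↔
      (CardEquiv X u₁ u₂ ∧ PstarOf 𝓐 X u₁ xf₁ ⊆ PstarOf 𝓐 X u₁ xf₂)) ∧
    (MoreAmbiguityAverse 𝓐 X R₁ R₂ ↔
      (CardEquiv X u₁ u₂ ∧ QstarOf 𝓐 X u₁ xf₂ ⊆ QstarOf 𝓐 X u₁ xf₁)) := by
  obtain ⟨Pfam₁, hfam₁, hatt₁, hPrep₁⟩ := hrep₁
  obtain ⟨Pfam₂, hfam₂, hatt₂, hPrep₂⟩ := hrep₂
  have hiff := moreAmbiguityAverse_iff_cardEquiv_and_ce_le hA hXc h₁ h₂ hu₁ hu₂ hconst₁ hconst₂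
    hxf₁ hxf₂
  refine ⟨hiff.trans (and_congr_right fun _ => ⟨PstarOf_subset_PstarOf, fun hsub _ hf =>
      ce_le_of_PstarOf_subset hA hfam₁ hatt₁ hPrep₁ hxf₁ hsub hf⟩),
    hiff.trans (and_congr_right fun hcard => ⟨QstarOf_subset_QstarOf, fun hsub _ hf =>
      ce_le_of_QstarOf_subset hA hfam₂ hatt₂ hPrep₂ hxf₂ hcard hsub hf⟩)⟩

theorem stmt18 {S V : Type*} [Nonempty S] [AddCommGroup V] [Module ℝ V]
    (𝓐 : Set (Set S)) (hA : IsSetAlg 𝓐)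
    (X : Set V) (hX : X.Nonempty) (hXc : Convex ℝ X)
    (R₁ R₂ : (S → V) → (S → V) → Prop)
    (h₁ : IBPref 𝓐 X R₁) (h₂ : IBPref 𝓐 X R₂)
    (u₁ u₂ : V → ℝ) (hu₁ : IsNonconstAffine X u₁) (hu₂ : IsNonconstAffine X u₂)
    (h0₁ : (0 : ℝ) ∈ interior (u₁ '' X)) (h0₂ : (0 : ℝ) ∈ interior (u₂ '' X))
    (hrep₁ : ∃ Pfam : Set (Set (Set S → ℝ)), IsPriorFamily 𝓐 Pfam ∧
      PAttained 𝓐 X u₁ Pfam ∧ PRep 𝓐 X R₁ u₁ Pfam)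
    (hrep₂ : ∃ Pfam : Set (Set (Set S → ℝ)), IsPriorFamily 𝓐 Pfam ∧
      PAttained 𝓐 X u₂ Pfam ∧ PRep 𝓐 X R₂ u₂ Pfam)
    (hconst₁ : ∀ x ∈ X, ∀ y ∈ X, (R₁ (constAct x) (constAct y) ↔ u₁ y ≤ u₁ x))
    (hconst₂ : ∀ x ∈ X, ∀ y ∈ X, (R₂ (constAct x) (constAct y) ↔ u₂ y ≤ u₂ x))
    (xf₁ xf₂ : (S → V) → V) (hxf₁ : IsCE 𝓐 X R₁ xf₁) (hxf₂ : IsCE 𝓐 X R₂ xf₂) :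
    (MoreAmbiguityAverse 𝓐 X R₁ R₂ ↔
      (CardEquiv X u₁ u₂ ∧ PstarOf 𝓐 X u₁ xf₁ ⊆ PstarOf 𝓐 X u₁ xf₂)) ∧
    (MoreAmbiguityAverse 𝓐 X R₁ R₂ ↔
      (CardEquiv X u₁ u₂ ∧ QstarOf 𝓐 X u₁ xf₂ ⊆ QstarOf 𝓐 X u₁ xf₁)) :=
  stmt18_general 𝓐 hA X hXc R₁ R₂ h₁ h₂ u₁ u₂ hu₁ hu₂ hrep₁ hrep₂ hconst₁ hconst₂ xf₁ xf₂ hxf₁ hxf₂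

end Paper
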